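/- arXiv:math/0608048 — 3 statements merged into one kernel-verified Lean document; each statement's English description precedes it below -/
import Mathlib

section
/- Let M be a formal real hypersurface in ℂᴺ of m-infinite type given in normal coordinates by the complexified defining equation w = Q(z,χ,τ) with Q(z,χ,τ) = τ + τᵐ Q̃(z,χ,τ), where Q̃(z,0,τ) = Q̃(0,χ,τ) = 0. Let H = (F,G): (ℂᴺ,0) → (ℂᴺ,0) be a formal holomorphic map sending M into itself, i.e. G(z,Q(z,χ,τ)) = Q(F(z,Q(z,χ,τ)), F̄(χ,τ), Ḡ(χ,τ)) as formal power series. If H is not transversally flat, with transversal order k (i.e. G(z,w) = wᵏ G̃(z,w) with G̃(z,0) ≢ 0), then G_{wᵏ}(z,0) is a constant (independent of z) and is a nonzero real number. -/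
/-!
Put χ = 0 in the mapping equation. Since Q̃ and Q̃' vanish there, the left side becomes
G(z,τ) and the right side Ḡ(0,τ) + Ḡ(0,τ)^{m'} Q̃'(F(z,τ), F̄(0,τ), Ḡ(0,τ)). Every monomial
of Q̃' contains some χ', and F̄(0,τ) = O(τ), Ḡ(0,τ) = O(τᵏ), so the second term is O(τ^{k+1}).
Comparing coefficients of τᵏ gives G_{wᵏ}(z,0) = conj G_{wᵏ}(0,0): it is independent of z and
real, and it is nonzero because G̃(z,0) ≢ 0.
-/

noncomputable section
open MvPowerSeries Complex

instance {σ : Type*} : IsDomain (MvPowerSeries σ ℂ) := NoZeroDivisors.to_isDomain _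

/-- total degree of a multi-index -/
def deg {σ : Type*} (d : σ →₀ ℕ) : ℕ := d.sum fun _ n => n

/-- substitution of formal power series (intended for substituted series with
vanishing constant term, in which case each coefficient of the result is the
finite sum below) -/
def pssubst {σ τ : Type*} [Fintype σ] [DecidableEq σ] [Fintype τ] [DecidableEq τ]
    (a : σ → MvPowerSeries τ ℂ) (f : MvPowerSeries σ ℂ) : MvPowerSeries τ ℂ :=
  fun μ => ∑ d ∈ Finset.Iic (Finsupp.equivFunOnFinite.symm fun _ => deg μ),
    MvPowerSeries.coeff d f * MvPowerSeries.coeff μ (∏ i, (a i) ^ (d i))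

/-- formal partial derivative ∂/∂X i -/
def pd {σ : Type*} [DecidableEq σ] (i : σ) (f : MvPowerSeries σ ℂ) : MvPowerSeries σ ℂ :=
  fun d => ((d i : ℂ) + 1) * MvPowerSeries.coeff (d + Finsupp.single i 1) f

/-- the series with complex-conjugated coefficients -/
def psconj {σ : Type*} (f : MvPowerSeries σ ℂ) : MvPowerSeries σ ℂ :=
  MvPowerSeries.map (starRingEnd ℂ) f

/-- variables (z, w) of source/target space -/
abbrev Wv (n : ℕ) : Type := Fin n ⊕ Unit
/-- variables (z, χ, τ) for complexified defining equations -/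
abbrev Vv (n : ℕ) : Type := Fin n ⊕ (Fin n ⊕ Unit)
/-- the variable τ -/
def tv (n : ℕ) : Vv n := Sum.inr (Sum.inr ())

/-- substitution (z, w) ↦ (z, Q(z,χ,τ)) -/
def sLHS {n : ℕ} (Q : MvPowerSeries (Vv n) ℂ) : Wv n → MvPowerSeries (Vv n) ℂ
  | Sum.inl i => MvPowerSeries.X (Sum.inl i)
  | Sum.inr _ => Q

/-- substitution (z, w) ↦ (χ, τ) -/
def sBar {n : ℕ} : Wv n → MvPowerSeries (Vv n) ℂ
  | Sum.inl i => MvPowerSeries.X (Sum.inr (Sum.inl i))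
  | Sum.inr _ => MvPowerSeries.X (Sum.inr (Sum.inr ()))

/-- the formal map H = (F, G) sends M = {w = Q(z,χ,τ)} into M' = {w' = Q'(z',χ',τ')}:
G(z,Q(z,χ,τ)) = Q'(F(z,Q(z,χ,τ)), F̄(χ,τ), Ḡ(χ,τ)) -/
def SendsInto {n : ℕ} (Q Q' : MvPowerSeries (Vv n) ℂ)
    (F : Fin n → MvPowerSeries (Wv n) ℂ) (G : MvPowerSeries (Wv n) ℂ) : Prop :=
  pssubst (sLHS Q) G =
    pssubst (fun v => match v with
      | Sum.inl i => pssubst (sLHS Q) (F i)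
      | Sum.inr (Sum.inl i) => pssubst sBar (psconj (F i))
      | Sum.inr (Sum.inr _) => pssubst sBar (psconj G)) Q'

namespace MvPowerSeries

section setVarsZero

variable {σ R : Type*} [CommSemiring R]

def setVarsZero (S : Set σ) : MvPowerSeries σ R →+* MvPowerSeries σ R :=
  rescale (Sᶜ.indicator 1)

theorem coeff_setVarsZero_of_forall {S : Set σ} {d : σ →₀ ℕ} (hd : ∀ s ∈ S, d s = 0)
    (f : MvPowerSeries σ R) : coeff d (setVarsZero S f) = coeff d f := by
  rw [setVarsZero, coeff_rescale, Finsupp.prod, Finset.prod_eq_one, one_mul]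
  intro s hs
  have hsS : s ∉ S := fun h => Finsupp.mem_support_iff.mp hs (hd s h)
  rw [Set.indicator_of_mem (Set.mem_compl hsS), Pi.one_apply, one_pow]

theorem coeff_setVarsZero_of_mem {S : Set σ} {d : σ →₀ ℕ} {s : σ} (hsS : s ∈ S) (hs : d s ≠ 0)
    (f : MvPowerSeries σ R) : coeff d (setVarsZero S f) = 0 := by
  rw [setVarsZero, coeff_rescale, Finsupp.prod,
    Finset.prod_eq_zero (Finsupp.mem_support_iff.mpr hs), zero_mul]
  rw [Set.indicator_of_notMem (Set.notMem_compl_iff.mpr hsS), zero_pow hs]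

theorem setVarsZero_eq_zero {S : Set σ} {f : MvPowerSeries σ R}
    (hf : ∀ d : σ →₀ ℕ, (∀ s ∈ S, d s = 0) → coeff d f = 0) : setVarsZero S f = 0 := by
  ext d
  by_cases hd : ∀ s ∈ S, d s = 0
  · rw [coeff_setVarsZero_of_forall hd, hf d hd, map_zero]
  · push Not at hd
    obtain ⟨s, hsS, hs⟩ := hd
    rw [coeff_setVarsZero_of_mem hsS hs, map_zero]

theorem setVarsZero_X_of_notMem {S : Set σ} {s : σ} (hs : s ∉ S) :
    setVarsZero S (X s : MvPowerSeries σ R) = X s := by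
  classical
  ext d
  by_cases hd : ∀ t ∈ S, d t = 0
  · rw [coeff_setVarsZero_of_forall hd]
  · push Not at hd
    obtain ⟨t, htS, ht⟩ := hd
    rw [coeff_setVarsZero_of_mem htS ht, coeff_X, if_neg]
    rintro rfl
    exact ht (Finsupp.single_eq_of_ne (ne_of_mem_of_not_mem htS hs))

theorem setVarsZero_X_of_mem {S : Set σ} {s : σ} (hs : s ∈ S) :
    setVarsZero S (X s : MvPowerSeries σ R) = 0 := by
  classical
  ext d
  by_cases hd : ∀ t ∈ S, d t = 0
  · rw [coeff_setVarsZero_of_forall hd, coeff_X, if_neg, map_zero]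
    rintro rfl
    simpa using hd s hs
  · push Not at hd
    obtain ⟨t, htS, ht⟩ := hd
    rw [coeff_setVarsZero_of_mem htS ht, map_zero]

theorem constantCoeff_setVarsZero (S : Set σ) (f : MvPowerSeries σ R) :
    constantCoeff (setVarsZero S f) = constantCoeff f := by
  rw [← coeff_zero_eq_constantCoeff_apply, coeff_setVarsZero_of_forall fun _ _ => rfl,
    coeff_zero_eq_constantCoeff_apply]

end setVarsZero

theorem prod_X_comp_pow {σ τ : Type*} [Fintype σ] {κ : σ → τ} (d : σ →₀ ℕ) :
    ∏ i, (X (κ i) : MvPowerSeries τ ℂ) ^ d i = monomial (Finsupp.mapDomain κ d) 1 := by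
  simp only [X_pow_eq, prod_monomial, Finset.prod_const_one, Finsupp.mapDomain]
  rw [Finsupp.sum_fintype _ _ fun _ => Finsupp.single_zero _]

section pssubst

variable {σ τ : Type*} [Fintype σ] [DecidableEq σ]

theorem mem_Iic_deg {d : σ →₀ ℕ} {μ : τ →₀ ℕ} (h : ∀ i, d i ≤ deg μ) :
    d ∈ Finset.Iic (Finsupp.equivFunOnFinite.symm fun _ => deg μ) :=
  Finset.mem_Iic.mpr h

variable [Fintype τ] [DecidableEq τ]

theorem coeff_pssubst (a : σ → MvPowerSeries τ ℂ) (f : MvPowerSeries σ ℂ) (μ : τ →₀ ℕ) :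
    coeff μ (pssubst a f) =
      ∑ d ∈ Finset.Iic (Finsupp.equivFunOnFinite.symm fun _ => deg μ),
        coeff d f * coeff μ (∏ i, a i ^ d i) := rfl

theorem pssubst_add (a : σ → MvPowerSeries τ ℂ) (f g : MvPowerSeries σ ℂ) :
    pssubst a (f + g) = pssubst a f + pssubst a g := by
  ext μ
  simp only [map_add, coeff_pssubst, add_mul, Finset.sum_add_distrib]

theorem constantCoeff_pssubst (a : σ → MvPowerSeries τ ℂ) (f : MvPowerSeries σ ℂ) :
    constantCoeff (pssubst a f) = constantCoeff f := by
  have h0 : (Finsupp.equivFunOnFinite.symm fun _ => deg (0 : τ →₀ ℕ) : σ →₀ ℕ) = ⊥ := by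
    rw [bot_eq_zero]; ext; simp [deg]
  rw [← coeff_zero_eq_constantCoeff_apply, coeff_pssubst, h0, Finset.Iic_bot,
    Finset.sum_singleton, bot_eq_zero]
  simp

theorem pssubst_X (a : σ → MvPowerSeries τ ℂ) {i : σ} (ha : constantCoeff (a i) = 0) :
    pssubst a (X i) = a i := by
  ext μ
  rcases eq_or_ne μ 0 with rfl | hμ
  · rw [coeff_zero_eq_constantCoeff_apply, coeff_zero_eq_constantCoeff_apply,
      constantCoeff_pssubst, constantCoeff_X, ha]
  have hμ : 1 ≤ deg μ := Nat.one_le_iff_ne_zero.mpr ((Finsupp.degree_eq_zero_iff μ).not.mpr hμ)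
  have hmem := mem_Iic_deg (d := Finsupp.single i 1) fun j => by
    rw [Finsupp.single_apply]; split_ifs <;> omega
  rw [coeff_pssubst, Finset.sum_eq_single_of_mem _ hmem fun d _ hd => by rw [coeff_X, if_neg hd,
    zero_mul], coeff_X, if_pos rfl, one_mul, Fintype.prod_eq_single i fun j hj => by
    rw [Finsupp.single_eq_of_ne hj, pow_zero], Finsupp.single_eq_same, pow_one]

theorem rescale_pssubst (c : τ → ℂ) (a : σ → MvPowerSeries τ ℂ) (f : MvPowerSeries σ ℂ) :
    rescale c (pssubst a f) = pssubst (fun i => rescale c (a i)) f := by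
  ext μ
  simp only [coeff_rescale, coeff_pssubst, Finset.mul_sum, ← map_pow, ← map_prod]
  exact Finset.sum_congr rfl fun d _ => mul_left_comm _ _ _

theorem setVarsZero_pssubst (S : Set τ) (a : σ → MvPowerSeries τ ℂ) (f : MvPowerSeries σ ℂ) :
    setVarsZero S (pssubst a f) = pssubst (fun i => setVarsZero S (a i)) f :=
  rescale_pssubst _ a f

theorem X_pow_dvd_pssubst {a : σ → MvPowerSeries τ ℂ} {f : MvPowerSeries σ ℂ} {s : τ} {n : ℕ}
    (h : ∀ d, coeff d f ≠ 0 → X s ^ n ∣ ∏ i, a i ^ d i) : X s ^ n ∣ pssubst a f := by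
  refine X_pow_dvd_iff.mpr fun μ hμ => Finset.sum_eq_zero fun d _ => ?_
  by_cases hd : coeff d f = 0
  · rw [hd, zero_mul]
  · rw [X_pow_dvd_iff.mp (h d hd) μ hμ, mul_zero]

theorem coeff_mapDomain_pssubst_X_comp {κ : σ → τ} (hκ : κ.Injective) (f : MvPowerSeries σ ℂ)
    (d : σ →₀ ℕ) : coeff (Finsupp.mapDomain κ d) (pssubst (fun i => X (κ i)) f) = coeff d f := by
  have hmem := mem_Iic_deg (d := d) (μ := Finsupp.mapDomain κ d) fun i => by
    have := Finsupp.le_degree (κ i) (Finsupp.mapDomain κ d)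
    rwa [Finsupp.mapDomain_apply hκ] at this
  rw [coeff_pssubst, Finset.sum_eq_single_of_mem _ hmem fun e _ he => by
    rw [prod_X_comp_pow, coeff_monomial, if_neg fun h => he (Finsupp.mapDomain_injective hκ h).symm,
      mul_zero], prod_X_comp_pow, coeff_monomial_same, mul_one]

theorem coeff_pssubst_X_comp_of_notMem_range {κ : σ → τ} (f : MvPowerSeries σ ℂ) {μ : τ →₀ ℕ}
    {t : τ} (ht : t ∉ Set.range κ) (hμ : μ t ≠ 0) :
    coeff μ (pssubst (fun i => X (κ i)) f) = 0 := by
  refine Finset.sum_eq_zero fun d _ => ?_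
  rw [prod_X_comp_pow, coeff_monomial, if_neg, mul_zero]
  rintro rfl
  exact hμ (Finsupp.mapDomain_of_notMem_range d t ht)

end pssubst

end MvPowerSeries

theorem coeff_psconj {σ : Type*} (f : MvPowerSeries σ ℂ) (d : σ →₀ ℕ) :
    coeff d (psconj f) = starRingEnd ℂ (coeff d f) :=
  coeff_map _ _ _

section Hypersurface

variable {n : ℕ}

/-- `(z, w) ↦ (z, τ)` -/
def embZTau (n : ℕ) : Wv n → Vv n := Sum.elim Sum.inl fun _ => tv n

/-- `(z, w) ↦ (χ, τ)` -/
def embChiTau (n : ℕ) : Wv n → Vv n := Sum.elim (fun i => Sum.inr (Sum.inl i)) fun _ => tv n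

def chiVars (n : ℕ) : Set (Vv n) := Set.range fun i => Sum.inr (Sum.inl i)

theorem embZTau_injective : (embZTau n).Injective :=
  Sum.inl_injective.sumElim (fun _ _ _ => rfl) fun _ _ => by simp [tv]

theorem embChiTau_injective : (embChiTau n).Injective :=
  (Sum.inr_injective.comp Sum.inl_injective).sumElim (fun _ _ _ => rfl) fun _ _ => by simp [tv]

theorem sBar_eq_X_embChiTau :
    (sBar : Wv n → MvPowerSeries (Vv n) ℂ) = fun v => X (embChiTau n v) := by
  funext v
  cases v <;> rfl

theorem embZTau_notMem_chiVars (v : Wv n) : embZTau n v ∉ chiVars n := by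
  rintro ⟨i, hi⟩
  cases v <;> simp [embZTau, tv] at hi

theorem setVarsZero_sLHS {m : ℕ} {Qt : MvPowerSeries (Vv n) ℂ}
    (hQt : ∀ d : Vv n →₀ ℕ, (∀ i, d (Sum.inr (Sum.inl i)) = 0) → coeff d Qt = 0) (v : Wv n) :
    setVarsZero (chiVars n) (sLHS (X (tv n) + X (tv n) ^ m * Qt) v) = X (embZTau n v) := by
  cases v with
  | inl i => exact setVarsZero_X_of_notMem (embZTau_notMem_chiVars (Sum.inl i))
  | inr u =>
    have hQt0 : setVarsZero (chiVars n) Qt = 0 :=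
      setVarsZero_eq_zero fun d hd => hQt d fun i => hd _ ⟨i, rfl⟩
    simp only [sLHS, map_add, map_mul, map_pow, hQt0, mul_zero, add_zero]
    exact setVarsZero_X_of_notMem (embZTau_notMem_chiVars (Sum.inr u))

theorem X_tv_dvd_setVarsZero_sBar (v : Wv n) :
    X (tv n) ∣ setVarsZero (chiVars n) (sBar v : MvPowerSeries (Vv n) ℂ) := by
  cases v with
  | inl i =>
    show _ ∣ setVarsZero _ (X (Sum.inr (Sum.inl i)))
    rw [setVarsZero_X_of_mem (S := chiVars n) ⟨i, rfl⟩]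
    exact dvd_zero _
  | inr u =>
    show _ ∣ setVarsZero _ (X (embZTau n (Sum.inr u)))
    rw [setVarsZero_X_of_notMem (embZTau_notMem_chiVars _)]
    rfl

theorem X_tv_pow_dvd_setVarsZero_pssubst_sBar {f : MvPowerSeries (Wv n) ℂ} {j : ℕ}
    (hf : ∀ d, coeff d f ≠ 0 → j ≤ deg d) :
    X (tv n) ^ j ∣ setVarsZero (chiVars n) (pssubst sBar f) := by
  rw [setVarsZero_pssubst]
  refine X_pow_dvd_pssubst fun d hd => (pow_dvd_pow _ (hf d hd)).trans ?_
  rw [show deg d = ∑ v, d v from Finsupp.degree_eq_sum d, ← Finset.prod_pow_eq_pow_sum]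
  exact Finset.prod_dvd_prod_of_dvd _ _ fun v _ =>
    pow_dvd_pow_of_dvd (X_tv_dvd_setVarsZero_sBar v) _

theorem X_tv_dvd_setVarsZero_pssubst_sBar_psconj {f : MvPowerSeries (Wv n) ℂ}
    (hf : constantCoeff f = 0) : X (tv n) ∣ setVarsZero (chiVars n) (pssubst sBar (psconj f)) := by
  refine pow_one (X (tv n) : MvPowerSeries (Vv n) ℂ) ▸
    X_tv_pow_dvd_setVarsZero_pssubst_sBar fun d hd => Nat.one_le_iff_ne_zero.mpr fun h0 => hd ?_
  rw [(Finsupp.degree_eq_zero_iff d).mp h0, coeff_psconj, coeff_zero_eq_constantCoeff_apply, hf,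
    map_zero]

theorem X_tv_pow_dvd_setVarsZero_pssubst_sBar_psconj {G : MvPowerSeries (Wv n) ℂ} {k : ℕ}
    (hG : X (Sum.inr ()) ^ k ∣ G) :
    X (tv n) ^ k ∣ setVarsZero (chiVars n) (pssubst sBar (psconj G)) :=
  X_tv_pow_dvd_setVarsZero_pssubst_sBar fun d hd => by
    rw [coeff_psconj, map_ne_zero] at hd
    by_contra! hlt
    exact hd (X_pow_dvd_iff.mp hG d ((Finsupp.le_degree _ d).trans_lt hlt))

theorem le_and_exists_ne_zero_of_coeff_X_tv_pow_mul_ne_zero {m' : ℕ} {Qt' : MvPowerSeries (Vv n) ℂ}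
    (hQt' : ∀ d : Vv n →₀ ℕ, (∀ i, d (Sum.inr (Sum.inl i)) = 0) → coeff d Qt' = 0)
    {d : Vv n →₀ ℕ} (hd : coeff d (X (tv n) ^ m' * Qt') ≠ 0) :
    m' ≤ d (tv n) ∧ ∃ i, d (Sum.inr (Sum.inl i)) ≠ 0 := by
  rw [X_pow_eq, coeff_monomial_mul] at hd
  split_ifs at hd with hle
  · refine ⟨by simpa using hle (tv n), ?_⟩
    by_contra! h
    refine hd ?_
    rw [one_mul]
    exact hQt' _ fun i => by simp [h i, tv]
  · exact absurd rfl hd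

theorem X_tv_pow_succ_dvd_setVarsZero_pssubst_sub {m' k : ℕ} (hm' : 1 ≤ m')
    {Qt' : MvPowerSeries (Vv n) ℂ}
    (hQt' : ∀ d : Vv n →₀ ℕ, (∀ i, d (Sum.inr (Sum.inl i)) = 0) → coeff d Qt' = 0)
    {A : Vv n → MvPowerSeries (Vv n) ℂ} (hA0 : constantCoeff (A (tv n)) = 0)
    (hAχ : ∀ i, X (tv n) ∣ setVarsZero (chiVars n) (A (Sum.inr (Sum.inl i))))
    (hAτ : X (tv n) ^ k ∣ setVarsZero (chiVars n) (A (tv n))) :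
    X (tv n) ^ (k + 1) ∣
      setVarsZero (chiVars n) (pssubst A (X (tv n) + X (tv n) ^ m' * Qt') - A (tv n)) := by
  rw [map_sub, setVarsZero_pssubst, pssubst_add,
    pssubst_X _ (by rwa [constantCoeff_setVarsZero]), add_sub_cancel_left]
  refine X_pow_dvd_pssubst fun d hd => ?_
  obtain ⟨hτ, i, hi⟩ := le_and_exists_ne_zero_of_coeff_X_tv_pow_mul_ne_zero hQt' hd
  have hne : tv n ≠ Sum.inr (Sum.inl i) := by simp [tv]
  have hpair := Finset.prod_dvd_prod_of_subset {tv n, Sum.inr (Sum.inl i)} Finset.univ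
    (fun v => setVarsZero (chiVars n) (A v) ^ d v) (Finset.subset_univ _)
  rw [Finset.prod_pair hne] at hpair
  rw [pow_succ]
  exact (mul_dvd_mul (hAτ.trans (dvd_pow_self _ (by omega)))
    ((hAχ i).trans (dvd_pow_self _ hi))).trans hpair

theorem coeff_mapDomain_embZTau_pssubst_sBar_of_ne_zero (f : MvPowerSeries (Wv n) ℂ)
    {d : Wv n →₀ ℕ} {i : Fin n} (hi : d (Sum.inl i) ≠ 0) :
    coeff (Finsupp.mapDomain (embZTau n) d) (pssubst sBar f) = 0 := by
  rw [sBar_eq_X_embChiTau]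
  refine coeff_pssubst_X_comp_of_notMem_range f (t := Sum.inl i) ?_ ?_
  · rintro ⟨v, hv⟩
    cases v <;> simp [embChiTau, tv] at hv
  · rwa [show (Sum.inl i : Vv n) = embZTau n (Sum.inl i) from rfl,
      Finsupp.mapDomain_apply embZTau_injective]

theorem coeff_single_tv_pssubst_sBar (f : MvPowerSeries (Wv n) ℂ) (j : ℕ) :
    coeff (Finsupp.single (tv n) j) (pssubst sBar f) = coeff (Finsupp.single (Sum.inr ()) j) f := by
  rw [sBar_eq_X_embChiTau, ← coeff_mapDomain_pssubst_X_comp embChiTau_injective,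
    Finsupp.mapDomain_single]
  rfl

theorem coeff_eq_coeff_pssubst_sBar_psconj_of_sendsInto {m m' k : ℕ} (hm' : 1 ≤ m')
    {Qt Qt' : MvPowerSeries (Vv n) ℂ}
    (hQt : ∀ d : Vv n →₀ ℕ, (∀ i, d (Sum.inr (Sum.inl i)) = 0) → coeff d Qt = 0)
    (hQt' : ∀ d : Vv n →₀ ℕ, (∀ i, d (Sum.inr (Sum.inl i)) = 0) → coeff d Qt' = 0)
    {F : Fin n → MvPowerSeries (Wv n) ℂ} {G : MvPowerSeries (Wv n) ℂ}
    (hF0 : ∀ i, constantCoeff (F i) = 0) (hG0 : constantCoeff G = 0)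
    (hmap : SendsInto (X (tv n) + X (tv n) ^ m * Qt) (X (tv n) + X (tv n) ^ m' * Qt') F G)
    (hG : X (Sum.inr ()) ^ k ∣ G) {d : Wv n →₀ ℕ} (hd : d (Sum.inr ()) = k) :
    coeff d G = coeff (Finsupp.mapDomain (embZTau n) d) (pssubst sBar (psconj G)) := by
  set μ := Finsupp.mapDomain (embZTau n) d
  have hμχ : ∀ s ∈ chiVars n, μ s = 0 := by
    rintro _ ⟨i, rfl⟩
    exact Finsupp.mapDomain_of_notMem_range _ _ fun ⟨v, hv⟩ => by
      cases v <;> simp [embZTau, tv] at hv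
  have hμτ : μ (tv n) = k := by
    rw [← hd]
    exact Finsupp.mapDomain_apply embZTau_injective d (Sum.inr ())
  have hLHS : setVarsZero (chiVars n) (pssubst (sLHS (X (tv n) + X (tv n) ^ m * Qt)) G) =
      pssubst (fun v => X (embZTau n v)) G := by
    rw [setVarsZero_pssubst]
    exact congrArg (pssubst · G) (funext (setVarsZero_sLHS hQt))
  have hdiff : X (tv n) ^ (k + 1) ∣ setVarsZero (chiVars n)
      (pssubst (sLHS (X (tv n) + X (tv n) ^ m * Qt)) G - pssubst sBar (psconj G)) := by
    rw [show _ = _ from hmap]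
    exact X_tv_pow_succ_dvd_setVarsZero_pssubst_sub hm' hQt'
      (show constantCoeff (pssubst sBar (psconj G)) = 0 by
        rw [constantCoeff_pssubst, psconj, constantCoeff_map, hG0, map_zero])
      (fun i => X_tv_dvd_setVarsZero_pssubst_sBar_psconj (hF0 i))
      (X_tv_pow_dvd_setVarsZero_pssubst_sBar_psconj hG)
  calc coeff d G = coeff μ (pssubst (fun v => X (embZTau n v)) G) :=
        (coeff_mapDomain_pssubst_X_comp embZTau_injective G d).symm
    _ = coeff μ (setVarsZero (chiVars n) (pssubst sBar (psconj G))) := by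
        rw [← hLHS, ← sub_eq_zero, ← map_sub, ← map_sub]
        exact X_pow_dvd_iff.mp hdiff μ (by omega)
    _ = coeff μ (pssubst sBar (psconj G)) := coeff_setVarsZero_of_forall hμχ _

end Hypersurface

theorem stmt_3_general (n m m' : ℕ) (hm' : 1 ≤ m')
    (Qt Qt' : MvPowerSeries (Vv n) ℂ)
    -- M is of m-infinite type: Q = τ + τ^m Q̃ with the normalizations below
    (hQtz0 : ∀ d : Vv n →₀ ℕ, (∀ i, d (Sum.inr (Sum.inl i)) = 0) → MvPowerSeries.coeff d Qt = 0)
    -- M' is of m'-infinite type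
    (hQt'z0 : ∀ d : Vv n →₀ ℕ, (∀ i, d (Sum.inr (Sum.inl i)) = 0) → MvPowerSeries.coeff d Qt' = 0)
    (F : Fin n → MvPowerSeries (Wv n) ℂ) (G : MvPowerSeries (Wv n) ℂ)
    (hF0 : ∀ i, MvPowerSeries.constantCoeff (F i) = 0)
    (hG0 : MvPowerSeries.constantCoeff G = 0)
    (hmap : SendsInto (MvPowerSeries.X (tv n) + (MvPowerSeries.X (tv n)) ^ m * Qt)
      (MvPowerSeries.X (tv n) + (MvPowerSeries.X (tv n)) ^ m' * Qt') F G)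
    -- H is not transversally flat, of transversal order k
    (k : ℕ)
    (htr : ∃ Gt : MvPowerSeries (Wv n) ℂ,
      G = (MvPowerSeries.X (Sum.inr ())) ^ k * Gt ∧
      ∃ e : Wv n →₀ ℕ, e (Sum.inr ()) = 0 ∧ MvPowerSeries.coeff e Gt ≠ 0) :
    -- conclusion: G_{w^k}(z,0) is constant in z, and is a nonzero real number
    (∀ d : Wv n →₀ ℕ, d (Sum.inr ()) = k → (∃ i, d (Sum.inl i) ≠ 0) →
      MvPowerSeries.coeff d G = 0) ∧
    (k.factorial : ℂ) * MvPowerSeries.coeff (Finsupp.single (Sum.inr ()) k) G ≠ 0 ∧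
    ((k.factorial : ℂ) * MvPowerSeries.coeff (Finsupp.single (Sum.inr ()) k) G).im = 0 := by
  obtain ⟨Gt, hGt, e, he, hGte⟩ := htr
  have hkey {d : Wv n →₀ ℕ} (hd : d (Sum.inr ()) = k) :=
    coeff_eq_coeff_pssubst_sBar_psconj_of_sendsInto hm' hQtz0 hQt'z0 hF0 hG0 hmap ⟨Gt, hGt⟩ hd
  have hconst : ∀ d : Wv n →₀ ℕ, d (Sum.inr ()) = k → (∃ i, d (Sum.inl i) ≠ 0) →
      coeff d G = 0 := fun d hd ⟨_, hi⟩ =>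
    (hkey hd).trans (coeff_mapDomain_embZTau_pssubst_sBar_of_ne_zero _ hi)
  have hreal : starRingEnd ℂ (coeff (Finsupp.single (Sum.inr ()) k) G) =
      coeff (Finsupp.single (Sum.inr ()) k) G := by
    have h := hkey (Finsupp.single_eq_same (a := Sum.inr ()))
    rw [Finsupp.mapDomain_single, show embZTau n (Sum.inr ()) = tv n from rfl,
      coeff_single_tv_pssubst_sBar, coeff_psconj] at h
    exact h.symm
  have hne : coeff (Finsupp.single (Sum.inr ()) k) G ≠ 0 := by
    intro h0
    have hGe : coeff (e + Finsupp.single (Sum.inr ()) k) G = coeff e Gt := by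
      rw [hGt, X_pow_eq, coeff_monomial_mul, if_pos le_add_self, one_mul, add_tsub_cancel_right]
    refine hGte (hGe ▸ ?_)
    by_cases hz : ∃ i, e (Sum.inl i) ≠ 0
    · obtain ⟨i, hi⟩ := hz
      exact hconst _ (by simp [he]) ⟨i, by simpa using hi⟩
    · have he0 : e = 0 := by
        push Not at hz
        ext (i | _)
        exacts [hz i, he]
      rwa [he0, zero_add]
  refine ⟨hconst, mul_ne_zero (Nat.cast_ne_zero.mpr k.factorial_ne_zero) hne, ?_⟩
  simp [Complex.conj_eq_iff_im.mp hreal]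

/-- Lemma (trordnv): for a self/source hypersurface of m-infinite type and a map
H=(F,G) sending M into M' (of m'-infinite type) which is not transversally flat with
transversal order k, the k-th transversal derivative G_{w^k}(z,0) is a nonzero real
constant. -/
theorem stmt_3 (n m m' : ℕ) (hm : 1 ≤ m) (hm' : 1 ≤ m')
    (Qt Qt' : MvPowerSeries (Vv n) ℂ)
    -- M is of m-infinite type: Q = τ + τ^m Q̃ with the normalizations below
    (hQtz0 : ∀ d : Vv n →₀ ℕ, (∀ i, d (Sum.inr (Sum.inl i)) = 0) → MvPowerSeries.coeff d Qt = 0)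
    (hQtχ0 : ∀ d : Vv n →₀ ℕ, (∀ i, d (Sum.inl i) = 0) → MvPowerSeries.coeff d Qt = 0)
    (hQtnt : ∃ d : Vv n →₀ ℕ, d (tv n) = 0 ∧ MvPowerSeries.coeff d Qt ≠ 0)
    -- M' is of m'-infinite type
    (hQt'z0 : ∀ d : Vv n →₀ ℕ, (∀ i, d (Sum.inr (Sum.inl i)) = 0) → MvPowerSeries.coeff d Qt' = 0)
    (hQt'χ0 : ∀ d : Vv n →₀ ℕ, (∀ i, d (Sum.inl i) = 0) → MvPowerSeries.coeff d Qt' = 0)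
    (hQt'nt : ∃ d : Vv n →₀ ℕ, d (tv n) = 0 ∧ MvPowerSeries.coeff d Qt' ≠ 0)
    (F : Fin n → MvPowerSeries (Wv n) ℂ) (G : MvPowerSeries (Wv n) ℂ)
    (hF0 : ∀ i, MvPowerSeries.constantCoeff (F i) = 0)
    (hG0 : MvPowerSeries.constantCoeff G = 0)
    (hmap : SendsInto (MvPowerSeries.X (tv n) + (MvPowerSeries.X (tv n)) ^ m * Qt)
      (MvPowerSeries.X (tv n) + (MvPowerSeries.X (tv n)) ^ m' * Qt') F G)
    -- H is not transversally flat, of transversal order k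
    (k : ℕ)
    (htr : ∃ Gt : MvPowerSeries (Wv n) ℂ,
      G = (MvPowerSeries.X (Sum.inr ())) ^ k * Gt ∧
      ∃ e : Wv n →₀ ℕ, e (Sum.inr ()) = 0 ∧ MvPowerSeries.coeff e Gt ≠ 0) :
    -- conclusion: G_{w^k}(z,0) is constant in z, and is a nonzero real number
    (∀ d : Wv n →₀ ℕ, d (Sum.inr ()) = k → (∃ i, d (Sum.inl i) ≠ 0) →
      MvPowerSeries.coeff d G = 0) ∧
    (k.factorial : ℂ) * MvPowerSeries.coeff (Finsupp.single (Sum.inr ()) k) G ≠ 0 ∧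
    ((k.factorial : ℂ) * MvPowerSeries.coeff (Finsupp.single (Sum.inr ()) k) G).im = 0 :=
  stmt_3_general n m m' hm' Qt Qt' hQtz0 hQt'z0 F G hF0 hG0 hmap k htr
end
end

section
/- Let M and M' be formal real hypersurfaces in ℂᴺ of m-infinite type and m'-infinite type respectively, given in normal coordinates with complexified defining equations w = τ + τᵐ Q̃(z,χ,τ) and w' = τ' + τ'^{m'} Q̃'(z',χ',τ'), where Q̃(z,0,τ) = Q̃(0,χ,τ) = 0, Q̃(z,χ,0) ≢ 0, and similarly for Q̃'. If H = (F,G) is a formal holomorphic map sending M into M' which is transversally nonflat with transversal order k = trord H, then (m' − 1)·k ≤ m − 1. -/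
noncomputable section
open MvPowerSeries Complex

/-!
Write `G = wᵏ G̃` and `Q = τ + τᵐ Q̃ = τ u` with `u = 1 + τᵐ⁻¹ Q̃`. Cancelling `τᵏ` in the
mapping equation gives `uᵏ G̃(z, Q) = Ḡ̃(χ, τ) + O(τ^((m'-1)k))`. If `(m' - 1) k ≥ m`, reducing
modulo `τᵐ` (where `Q ≡ τ`) gives `U G̃(z, τ) ≡ Ḡ̃(χ, τ)` with `U = uᵏ`. Since `Q̃` vanishes on
`χ = 0` and on `z = 0`, so does `U - 1`; specialising the congruence to `χ = 0`, to `z = 0` and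
to both yields `G̃(z, τ) ≡ Ḡ̃(χ, τ)`, hence `τᵐ ∣ (U - 1) G̃(z, τ)`. Now `U - 1 = τᵐ⁻¹ Q̃ S` with
`S(0) = k ≠ 0`, so `τ ∣ Q̃ S G̃(z, τ)`; setting `τ = 0` contradicts `Q̃(z, χ, 0) ≢ 0` and
`G̃(z, 0) ≢ 0`, since `ℂ[[z, χ, τ]]` is a domain.
-/

section Substitution

variable {σ τ R : Type*} [CommRing R]

theorem X_pow_dvd_subst_sub_subst {a b : σ → MvPowerSeries τ R} (ha : HasSubst a)
    (hb : HasSubst b) {s : τ} {m : ℕ} (hab : ∀ i, X s ^ m ∣ a i - b i)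
    (f : MvPowerSeries σ R) : X s ^ m ∣ subst a f - subst b f := by
  have hprod (d : σ →₀ ℕ) :
      X s ^ m ∣ (d.prod fun i e => a i ^ e) - d.prod fun i e => b i ^ e := by
    rw [← Ideal.mem_span_singleton, ← Ideal.Quotient.eq]
    simp only [map_finsuppProd, map_pow,
      Ideal.Quotient.eq.2 (Ideal.mem_span_singleton.2 (hab _))]
  rw [X_pow_dvd_iff]
  intro μ hμ
  rw [map_sub, coeff_subst ha, coeff_subst hb,
    ← finsum_sub_distrib (coeff_subst_finite ha f μ) (coeff_subst_finite hb f μ)]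
  refine finsum_eq_zero_of_forall_eq_zero fun d => ?_
  rw [← smul_sub, ← map_sub, X_pow_dvd_iff.1 (hprod d) μ hμ, smul_zero]

theorem MvPowerSeries.X_ne_zero [Nontrivial R] (s : σ) : (X s : MvPowerSeries σ R) ≠ 0 :=
  fun h => by simpa using congrArg (coeff (Finsupp.single s 1)) h

variable (R) in
def killVars (p : σ → Prop) [DecidablePred p] (i : σ) : MvPowerSeries σ R :=
  if p i then 0 else X i

variable (p : σ → Prop) [DecidablePred p]

theorem hasSubst_killVars [Finite σ] : HasSubst (killVars R p) :=
  hasSubst_of_constantCoeff_zero fun i => by unfold killVars; split_ifs <;> simp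

open Classical in
theorem finsuppProd_killVars_pow (d : σ →₀ ℕ) :
    (d.prod fun i e => killVars R p i ^ e) =
      if ∀ i, p i → d i = 0 then monomial d 1 else 0 := by
  split_ifs with hd
  · rw [monomial_one_eq]
    refine Finsupp.prod_congr fun i hi => ?_
    rw [killVars, if_neg fun hp => Finsupp.mem_support_iff.1 hi (hd i hp)]
  · push Not at hd
    obtain ⟨i, hp, hi⟩ := hd
    exact Finset.prod_eq_zero (Finsupp.mem_support_iff.2 hi) (by simp [killVars, hp, hi])

open Classical in
theorem coeff_subst_killVars [Finite σ] (f : MvPowerSeries σ R) (d : σ →₀ ℕ) :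
    coeff d (subst (killVars R p) f) = if ∀ i, p i → d i = 0 then coeff d f else 0 := by
  rw [coeff_subst (hasSubst_killVars p), finsum_eq_single _ d fun d' hd' => ?_]
  · rw [finsuppProd_killVars_pow]
    split_ifs <;> simp
  · rw [finsuppProd_killVars_pow]
    split_ifs <;> simp [coeff_monomial, hd'.symm]

theorem coeff_subst_killVars_of_forall [Finite σ] (f : MvPowerSeries σ R) {d : σ →₀ ℕ}
    (hd : ∀ i, p i → d i = 0) : coeff d (subst (killVars R p) f) = coeff d f := by
  classical
  rw [coeff_subst_killVars, if_pos hd]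

theorem subst_killVars_ne_zero [Finite σ] {f : MvPowerSeries σ R} {d : σ →₀ ℕ}
    (hd : ∀ i, p i → d i = 0) (hf : coeff d f ≠ 0) : subst (killVars R p) f ≠ 0 := fun h => by
  rw [← coeff_subst_killVars_of_forall p f hd, h, map_zero] at hf
  exact hf rfl

theorem subst_killVars_eq_zero [Finite σ] {f : MvPowerSeries σ R}
    (hf : ∀ d : σ →₀ ℕ, (∀ i, p i → d i = 0) → coeff d f = 0) :
    subst (killVars R p) f = 0 := by
  classical
  ext d
  rw [coeff_subst_killVars, map_zero]
  split_ifs with hd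
  exacts [hf d hd, rfl]

theorem subst_killVars_X [Finite σ] (i : σ) :
    subst (killVars R p) (X i : MvPowerSeries σ R) = if p i then 0 else X i :=
  subst_X (hasSubst_killVars p) i

theorem subst_killVars_comm [Finite σ] (q : σ → Prop) [DecidablePred q]
    (f : MvPowerSeries σ R) :
    subst (killVars R p) (subst (killVars R q) f) =
      subst (killVars R q) (subst (killVars R p) f) := by
  rw [subst_comp_subst_apply (hasSubst_killVars q) (hasSubst_killVars p),
    subst_comp_subst_apply (hasSubst_killVars p) (hasSubst_killVars q)]
  congr 1
  funext i
  simp only [killVars]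
  split_ifs <;> simp only [← substAlgHom_apply (hasSubst_killVars _), map_zero, substAlgHom_X,
    killVars, *, if_true, if_false]

theorem X_pow_dvd_subst_killVars [Finite σ] {s : σ} (hs : ¬ p s) {m : ℕ}
    {f : MvPowerSeries σ R} (hf : X s ^ m ∣ f) : X s ^ m ∣ subst (killVars R p) f := by
  obtain ⟨c, rfl⟩ := hf
  rw [subst_mul (hasSubst_killVars p), subst_pow (hasSubst_killVars p), subst_killVars_X,
    if_neg hs]
  exact dvd_mul_right _ _

theorem subst_one_add_mul_pow_eq_one {τ : Type*} {a : σ → MvPowerSeries τ R} (ha : HasSubst a)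
    {f : MvPowerSeries σ R} (hf : subst a f = 0) (c : MvPowerSeries σ R) (k : ℕ) :
    subst a ((1 + c * f) ^ k) = 1 := by
  rw [subst_pow ha, subst_add ha, subst_mul ha, hf, mul_zero, add_zero, ← substAlgHom_apply ha,
    map_one, one_pow]

end Substitution

theorem pssubst_eq_subst {σ τ : Type*} [Fintype σ] [DecidableEq σ] [Fintype τ] [DecidableEq τ]
    {a : σ → MvPowerSeries τ ℂ} (ha : ∀ i, constantCoeff (a i) = 0)
    (f : MvPowerSeries σ ℂ) : pssubst a f = subst a f := by
  ext μ
  rw [coeff_subst (hasSubst_of_constantCoeff_zero ha), finsum_eq_sum_of_support_subset _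
    (s := Finset.Iic (Finsupp.equivFunOnFinite.symm fun _ => deg μ)) fun d hd => ?_]
  · refine Finset.sum_congr rfl fun d _ => ?_
    rw [smul_eq_mul, Finsupp.prod_fintype _ _ fun _ => pow_zero _]
  · contrapose hd
    simp only [Finset.coe_Iic, Set.mem_Iic, Finsupp.le_def, not_forall, not_le] at hd
    obtain ⟨i, hi⟩ := hd
    rw [Function.notMem_support, coeff_of_lt_order (f := d.prod _), smul_zero]
    have hdeg : deg μ < d i := by simpa using hi
    calc ((Finsupp.degree μ : ℕ) : ℕ∞) = deg μ := rfl
      _ < d i := by exact_mod_cast hdeg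
      _ ≤ (a i ^ d i).order := le_order_pow_of_constantCoeff_eq_zero _ (ha i)
      _ ≤ ∑ j, (a j ^ d j).order :=
          Finset.single_le_sum (f := fun j => (a j ^ d j).order) (fun j _ => zero_le)
            (Finset.mem_univ i)
      _ ≤ (d.prod fun s e => a s ^ e).order := by
          rw [Finsupp.prod_fintype _ _ fun _ => pow_zero _]
          exact le_order_prod _ _

section TransversalOrder

variable {n : ℕ}

theorem constantCoeff_pssubst_eq_zero {σ τ : Type*} [Fintype σ] [DecidableEq σ] [Fintype τ]
    [DecidableEq τ] {a : σ → MvPowerSeries τ ℂ} (ha : ∀ i, constantCoeff (a i) = 0)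
    {f : MvPowerSeries σ ℂ} (hf : constantCoeff f = 0) : constantCoeff (pssubst a f) = 0 := by
  rw [pssubst_eq_subst ha]
  exact constantCoeff_subst_eq_zero (hasSubst_of_constantCoeff_zero ha) ha hf

theorem constantCoeff_psconj {σ : Type*} (f : MvPowerSeries σ ℂ) :
    constantCoeff (psconj f) = starRingEnd ℂ (constantCoeff f) :=
  constantCoeff_map _ f

theorem constantCoeff_sBar (i : Wv n) : constantCoeff (sBar i) = 0 := by
  cases i <;> simp [sBar]

theorem constantCoeff_sLHS {Q : MvPowerSeries (Vv n) ℂ} (hQ : constantCoeff Q = 0) (i : Wv n) :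
    constantCoeff (sLHS Q i) = 0 := by
  cases i <;> simp [sLHS, hQ]

theorem exists_eq_of_sendsInto {Q Qt' : MvPowerSeries (Vv n) ℂ} (hQ : constantCoeff Q = 0)
    {m' k : ℕ} (hk : 1 ≤ k) {F : Fin n → MvPowerSeries (Wv n) ℂ}
    (hF : ∀ i, constantCoeff (F i) = 0) {Gt : MvPowerSeries (Wv n) ℂ}
    (hmap : SendsInto Q (X (tv n) + X (tv n) ^ m' * Qt') F (X (Sum.inr ()) ^ k * Gt)) :
    ∃ P, Q ^ k * subst (sLHS Q) Gt = X (tv n) ^ k * subst sBar (psconj Gt) +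
      (X (tv n) ^ k * subst sBar (psconj Gt)) ^ m' * P := by
  have hsB := hasSubst_of_constantCoeff_zero (constantCoeff_sBar (n := n))
  have hbar : pssubst sBar (psconj (X (Sum.inr ()) ^ k * Gt)) =
      X (tv n) ^ k * subst sBar (psconj Gt) := by
    rw [pssubst_eq_subst constantCoeff_sBar, psconj, map_mul, map_pow, map_X, subst_mul hsB,
      subst_pow hsB, subst_X hsB]
    rfl
  obtain ⟨A, hA0, hAτ, hmap⟩ : ∃ A : Vv n → MvPowerSeries (Vv n) ℂ,
      (∀ v, constantCoeff (A v) = 0) ∧ A (tv n) = X (tv n) ^ k * subst sBar (psconj Gt) ∧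
      pssubst (sLHS Q) (X (Sum.inr ()) ^ k * Gt) = pssubst A (X (tv n) + X (tv n) ^ m' * Qt') := by
    refine ⟨_, ?_, hbar, hmap⟩
    rintro (i | i | _)
    · exact constantCoeff_pssubst_eq_zero (constantCoeff_sLHS hQ) (hF i)
    · exact constantCoeff_pssubst_eq_zero constantCoeff_sBar (by simp [constantCoeff_psconj, hF i])
    · show constantCoeff (pssubst sBar (psconj (X (Sum.inr ()) ^ k * Gt))) = 0
      simp [hbar, zero_pow (by omega : k ≠ 0)]
  have hsA := hasSubst_of_constantCoeff_zero hA0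
  have hsL := hasSubst_of_constantCoeff_zero (constantCoeff_sLHS hQ)
  rw [pssubst_eq_subst (constantCoeff_sLHS hQ), pssubst_eq_subst hA0, subst_add hsA,
    subst_mul hsA, subst_pow hsA, subst_X hsA, hAτ, subst_mul hsL, subst_pow hsL,
    subst_X hsL] at hmap
  exact ⟨_, hmap⟩

theorem X_pow_dvd_of_sendsInto {m m' k : ℕ} (hm : 1 ≤ m) (hm' : 1 ≤ m') (hk : 1 ≤ k)
    {Qt Qt' : MvPowerSeries (Vv n) ℂ} (hQt : constantCoeff Qt = 0)
    {F : Fin n → MvPowerSeries (Wv n) ℂ} (hF : ∀ i, constantCoeff (F i) = 0)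
    {Gt : MvPowerSeries (Wv n) ℂ}
    (hmap : SendsInto (X (tv n) + X (tv n) ^ m * Qt) (X (tv n) + X (tv n) ^ m' * Qt') F
      (X (Sum.inr ()) ^ k * Gt)) :
    X (tv n) ^ ((m' - 1) * k) ∣ (1 + X (tv n) ^ (m - 1) * Qt) ^ k *
      subst (sLHS (X (tv n) + X (tv n) ^ m * Qt)) Gt - subst sBar (psconj Gt) := by
  obtain ⟨P, hP⟩ := exists_eq_of_sendsInto (by simp [hQt]) hk hF hmap
  set t : MvPowerSeries (Vv n) ℂ := X (tv n)
  set Φ := subst (sLHS (t + t ^ m * Qt)) Gt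
  set b := subst sBar (psconj Gt)
  have hQ : t + t ^ m * Qt = t * (1 + t ^ (m - 1) * Qt) := by
    obtain ⟨j, rfl⟩ : ∃ j, m = j + 1 := ⟨m - 1, by omega⟩
    rw [add_tsub_cancel_right]
    ring
  have hm'k : k * m' = k + (m' - 1) * k := by
    obtain ⟨j, rfl⟩ : ∃ j, m' = j + 1 := ⟨m' - 1, by omega⟩
    rw [add_tsub_cancel_right]
    ring
  refine ⟨b ^ m' * P, sub_eq_iff_eq_add'.2 <|
    mul_left_cancel₀ (pow_ne_zero k (X_ne_zero (tv n))) ?_⟩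
  calc t ^ k * ((1 + t ^ (m - 1) * Qt) ^ k * Φ) = (t + t ^ m * Qt) ^ k * Φ := by
        rw [hQ, mul_pow, mul_assoc]
    _ = t ^ k * b + (t ^ k * b) ^ m' * P := hP
    _ = t ^ k * (b + t ^ ((m' - 1) * k) * (b ^ m' * P)) := by
        rw [mul_pow, ← pow_mul, hm'k, pow_add]
        ring

def toZτ (n : ℕ) : Wv n ↪ Vv n :=
  ⟨Sum.map id fun _ => Sum.inr (),
    Sum.map_injective.2 ⟨Function.injective_id, fun _ _ _ => rfl⟩⟩

abbrev killZ (n : ℕ) : Vv n → MvPowerSeries (Vv n) ℂ := killVars ℂ fun v => v.isLeft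

abbrev killχ (n : ℕ) : Vv n → MvPowerSeries (Vv n) ℂ :=
  killVars ℂ fun v => v.elim (fun _ => false) Sum.isLeft

abbrev killτ (n : ℕ) : Vv n → MvPowerSeries (Vv n) ℂ := killVars ℂ (· = tv n)

theorem subst_killχ_rename (f : MvPowerSeries (Wv n) ℂ) :
    subst (killχ n) (rename (toZτ n) f) = rename (toZτ n) f := by
  rw [rename_eq_subst, subst_comp_subst_apply (HasSubst.X_comp _) (hasSubst_killVars _)]
  congr 1
  funext i
  cases i <;> simp [subst_killVars_X, toZτ]

theorem subst_killZ_sBar (f : MvPowerSeries (Wv n) ℂ) :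
    subst (killZ n) (subst sBar f) = subst sBar f := by
  rw [subst_comp_subst_apply (hasSubst_of_constantCoeff_zero constantCoeff_sBar)
    (hasSubst_killVars _)]
  congr 1
  funext i
  cases i <;> simp [subst_killVars_X, sBar]

theorem subst_killτ_rename_ne_zero {f : MvPowerSeries (Wv n) ℂ} {e : Wv n →₀ ℕ}
    (he : e (Sum.inr ()) = 0) (hf : coeff e f ≠ 0) : subst (killτ n) (rename (toZτ n) f) ≠ 0 := by
  refine subst_killVars_ne_zero _ (d := Finsupp.embDomain (toZτ n) e) ?_ ?_
  · rintro _ rfl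
    rw [show tv n = toZτ n (Sum.inr ()) from rfl, Finsupp.embDomain_apply_self, he]
  · rwa [coeff_embDomain_rename]

theorem X_pow_dvd_subst_sLHS_sub_rename {m : ℕ} {Qt : MvPowerSeries (Vv n) ℂ}
    (hQt : constantCoeff Qt = 0) (f : MvPowerSeries (Wv n) ℂ) :
    X (tv n) ^ m ∣ subst (sLHS (X (tv n) + X (tv n) ^ m * Qt)) f - rename (toZτ n) f := by
  rw [rename_eq_subst]
  refine X_pow_dvd_subst_sub_subst (hasSubst_of_constantCoeff_zero ?_) (HasSubst.X_comp _) ?_ f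
  · rintro (i | _) <;> simp [sLHS, hQt]
  · rintro (i | _) <;> simp [sLHS, toZτ, tv]

theorem X_pow_dvd_sub_one_mul {m : ℕ} {U g b : MvPowerSeries (Vv n) ℂ}
    (hUχ : subst (killχ n) U = 1) (hUz : subst (killZ n) U = 1)
    (hg : subst (killχ n) g = g) (hb : subst (killZ n) b = b)
    (h : X (tv n) ^ m ∣ U * g - b) : X (tv n) ^ m ∣ (U - 1) * g := by
  have hE := hasSubst_killVars (R := ℂ) fun v : Vv n => v.elim (fun _ => false) Sum.isLeft
  have hZ := hasSubst_killVars (R := ℂ) fun v : Vv n => v.isLeft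
  have hχ0 : X (tv n) ^ m ∣ subst (killχ n) (U * g - b) :=
    X_pow_dvd_subst_killVars _ (by simp [tv]) h
  have hz0 : X (tv n) ^ m ∣ subst (killZ n) (U * g - b) :=
    X_pow_dvd_subst_killVars _ (by simp [tv]) h
  have hχz0 : X (tv n) ^ m ∣ subst (killZ n) (subst (killχ n) (U * g - b)) :=
    X_pow_dvd_subst_killVars _ (by simp [tv]) hχ0
  rw [subst_sub hE, subst_mul hE, hUχ, hg, one_mul] at hχ0 hχz0
  rw [subst_sub hZ, subst_mul hZ, hUz, hb, one_mul] at hz0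
  rw [subst_sub hZ, subst_killVars_comm _ _ b, hb] at hχz0
  have key : (U - 1) * g = (U * g - b) - ((g - subst (killχ n) b) -
      (subst (killZ n) g - subst (killχ n) b) + (subst (killZ n) g - b)) := by ring
  rw [key]
  exact dvd_sub h (dvd_add (dvd_sub hχ0 hχz0) hz0)

theorem not_X_pow_dvd_sub_one_mul {m k : ℕ} (hm : 1 ≤ m) (hk : 1 ≤ k)
    {Qt g : MvPowerSeries (Vv n) ℂ} (hQt : constantCoeff Qt = 0)
    (hQτ : subst (killτ n) Qt ≠ 0) (hgτ : subst (killτ n) g ≠ 0) :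
    ¬ X (tv n) ^ m ∣ ((1 + X (tv n) ^ (m - 1) * Qt) ^ k - 1) * g := by
  intro h
  set x := X (tv n) ^ (m - 1) * Qt
  set S := ∑ i ∈ Finset.range k, (1 + x) ^ i
  have hS : constantCoeff S = k := by simp [S, x, hQt]
  have hdvd : X (tv n) ∣ Qt * S * g := by
    rw [← mul_dvd_mul_iff_left (pow_ne_zero (m - 1) (X_ne_zero (tv n))), ← pow_succ,
      Nat.sub_add_cancel hm]
    convert h using 1
    rw [← mul_geom_sum, add_sub_cancel_left]
    ring
  have hSτ : subst (killτ n) S ≠ 0 := subst_killVars_ne_zero _ (d := 0) (fun _ _ => rfl) <| by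
    rw [coeff_zero_eq_constantCoeff_apply, hS]
    exact Nat.cast_ne_zero.2 (by omega)
  have hT := hasSubst_killVars (R := ℂ) (· = tv n)
  obtain ⟨c, hc⟩ := hdvd
  have hc' := congrArg (subst (killτ n)) hc
  rw [subst_mul hT, subst_mul hT, subst_mul hT, subst_killVars_X, if_pos rfl, zero_mul] at hc'
  exact mul_ne_zero (mul_ne_zero hQτ hSτ) hgτ hc'

end TransversalOrder

theorem stmt_4_general (n m m' : ℕ) (hm : 1 ≤ m)
    (Qt Qt' : MvPowerSeries (Vv n) ℂ)
(hQtz0 : ∀ d : Vv n →₀ ℕ, (∀ i, d (Sum.inr (Sum.inl i)) = 0) → MvPowerSeries.coeff d Qt = 0)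
    (hQtχ0 : ∀ d : Vv n →₀ ℕ, (∀ i, d (Sum.inl i) = 0) → MvPowerSeries.coeff d Qt = 0)
    (hQtnt : ∃ d : Vv n →₀ ℕ, d (tv n) = 0 ∧ MvPowerSeries.coeff d Qt ≠ 0)
(F : Fin n → MvPowerSeries (Wv n) ℂ) (G : MvPowerSeries (Wv n) ℂ)
    (hF0 : ∀ i, MvPowerSeries.constantCoeff (F i) = 0)
    (hmap : SendsInto (MvPowerSeries.X (tv n) + (MvPowerSeries.X (tv n)) ^ m * Qt)
      (MvPowerSeries.X (tv n) + (MvPowerSeries.X (tv n)) ^ m' * Qt') F G)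
    (k : ℕ)
    (htr : ∃ Gt : MvPowerSeries (Wv n) ℂ,
      G = (MvPowerSeries.X (Sum.inr ())) ^ k * Gt ∧
      ∃ e : Wv n →₀ ℕ, e (Sum.inr ()) = 0 ∧ MvPowerSeries.coeff e Gt ≠ 0) :
    (m' - 1) * k ≤ m - 1 := by
  obtain ⟨Gt, rfl, e, he, hGt⟩ := htr
  obtain ⟨d, hd, hQd⟩ := hQtnt
  by_contra! hlt
  obtain ⟨hm', hk⟩ : 0 < m' - 1 ∧ 0 < k := CanonicallyOrderedAdd.mul_pos.1 (by omega)
  have hQt : constantCoeff Qt = 0 := hQtχ0 0 fun _ => rfl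
  set U := (1 + X (tv n) ^ (m - 1) * Qt) ^ k
  have hUΦ := (pow_dvd_pow (X (tv n)) (show m ≤ (m' - 1) * k by omega)).trans
    (X_pow_dvd_of_sendsInto hm (by omega) hk hQt hF0 hmap)
  have hUg : X (tv n) ^ m ∣ U * rename (toZτ n) Gt - subst sBar (psconj Gt) := by
    convert dvd_sub hUΦ (dvd_mul_of_dvd_right (X_pow_dvd_subst_sLHS_sub_rename hQt Gt) U)
      using 1
    ring
  have hUχ : subst (killχ n) U = 1 := subst_one_add_mul_pow_eq_one (hasSubst_killVars _)
    (subst_killVars_eq_zero _ fun d hd => hQtz0 d fun _ => hd _ rfl) _ _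
  have hUz : subst (killZ n) U = 1 := subst_one_add_mul_pow_eq_one (hasSubst_killVars _)
    (subst_killVars_eq_zero _ fun d hd => hQtχ0 d fun _ => hd _ rfl) _ _
  exact not_X_pow_dvd_sub_one_mul hm hk hQt
    (subst_killVars_ne_zero _ (fun _ hi => hi ▸ hd) hQd) (subst_killτ_rename_ne_zero he hGt)
    (X_pow_dvd_sub_one_mul hUχ hUz (subst_killχ_rename Gt) (subst_killZ_sBar _) hUg)

/-- Proposition (trordest): if H = (F,G) sends the m-infinite type M into the
m'-infinite type M' and is transversally nonflat with transversal order k, then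
(m'-1)·k ≤ m-1. -/
theorem stmt_4 (n m m' : ℕ) (hm : 1 ≤ m) (hm' : 1 ≤ m')
    (Qt Qt' : MvPowerSeries (Vv n) ℂ)
(hQtz0 : ∀ d : Vv n →₀ ℕ, (∀ i, d (Sum.inr (Sum.inl i)) = 0) → MvPowerSeries.coeff d Qt = 0)
    (hQtχ0 : ∀ d : Vv n →₀ ℕ, (∀ i, d (Sum.inl i) = 0) → MvPowerSeries.coeff d Qt = 0)
    (hQtnt : ∃ d : Vv n →₀ ℕ, d (tv n) = 0 ∧ MvPowerSeries.coeff d Qt ≠ 0)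
(hQt'z0 : ∀ d : Vv n →₀ ℕ, (∀ i, d (Sum.inr (Sum.inl i)) = 0) → MvPowerSeries.coeff d Qt' = 0)
    (hQt'χ0 : ∀ d : Vv n →₀ ℕ, (∀ i, d (Sum.inl i) = 0) → MvPowerSeries.coeff d Qt' = 0)
    (hQt'nt : ∃ d : Vv n →₀ ℕ, d (tv n) = 0 ∧ MvPowerSeries.coeff d Qt' ≠ 0)
(F : Fin n → MvPowerSeries (Wv n) ℂ) (G : MvPowerSeries (Wv n) ℂ)
    (hF0 : ∀ i, MvPowerSeries.constantCoeff (F i) = 0)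
    (hG0 : MvPowerSeries.constantCoeff G = 0)
    (hmap : SendsInto (MvPowerSeries.X (tv n) + (MvPowerSeries.X (tv n)) ^ m * Qt)
      (MvPowerSeries.X (tv n) + (MvPowerSeries.X (tv n)) ^ m' * Qt') F G)
    (k : ℕ)
    (htr : ∃ Gt : MvPowerSeries (Wv n) ℂ,
      G = (MvPowerSeries.X (Sum.inr ())) ^ k * Gt ∧
      ∃ e : Wv n →₀ ℕ, e (Sum.inr ()) = 0 ∧ MvPowerSeries.coeff e Gt ≠ 0) :
    (m' - 1) * k ≤ m - 1 :=
  stmt_4_general n m m' hm Qt Qt' hQtz0 hQtχ0 hQtnt F G hF0 hmap k htr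
end
end

section
/- For each positive integer k, the map T_k(z,w) = (z, wᵏ) sends the real-analytic hypersurface M_k ⊂ ℂ² defined by w = w̄ · e^{i|z|²/k} into the hypersurface M ⊂ ℂ² defined by w = w̄ · e^{i|z|²}. Consequently, the maps H_k(z,w) = (√k z, wᵏ) are holomorphic self-maps of the 1-infinite type hypersurface M = {w = w̄ e^{i|z|²}} of transversal order k, for every k ≥ 1. -/
open Complex ComplexConjugate

theorem pow_eq_conj_pow_mul_exp_natCast_mul {w a : ℂ} (h : w = conj w * exp a) (k : ℕ) :
    w ^ k = conj (w ^ k) * exp (k * a) := by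
  conv_lhs => rw [h]
  rw [mul_pow, map_pow, exp_nat_mul]

theorem normSq_ofReal_sqrt_mul {r : ℝ} (hr : 0 ≤ r) (z : ℂ) :
    normSq ((Real.sqrt r : ℂ) * z) = r * normSq z := by
  rw [normSq_mul, normSq_ofReal, Real.mul_self_sqrt hr]

/-- Example (type1): T_k(z,w) = (z,wᵏ) maps M_k = {w = w̄·e^{i|z|²/k}} into
M = {w = w̄·e^{i|z|²}}; consequently H_k(z,w) = (√k·z, wᵏ) is a holomorphic self-map of
the 1-infinite type hypersurface M, and its normal component wᵏ has transversal order k. -/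
theorem stmt_11 (k : ℕ) (hk : 1 ≤ k) :
    (∀ z w : ℂ, w = (starRingEnd ℂ) w * Complex.exp (Complex.I * (Complex.normSq z : ℂ) / k) →
      w ^ k = (starRingEnd ℂ) (w ^ k) * Complex.exp (Complex.I * (Complex.normSq z : ℂ))) ∧
    (∀ z w : ℂ, w = (starRingEnd ℂ) w * Complex.exp (Complex.I * (Complex.normSq z : ℂ)) →
      w ^ k = (starRingEnd ℂ) (w ^ k) *
        Complex.exp (Complex.I * (Complex.normSq (((Real.sqrt k : ℝ) : ℂ) * z) : ℂ))) ∧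
    (∀ j, j < k → iteratedDeriv j (fun w : ℂ => w ^ k) 0 = 0) ∧
    iteratedDeriv k (fun w : ℂ => w ^ k) 0 ≠ 0 := by
  have hk0 : (k : ℂ) ≠ 0 := Nat.cast_ne_zero.mpr (by omega)
  refine ⟨fun z w h => ?_, fun z w h => ?_, fun j hj => ?_, ?_⟩
  · simpa only [mul_div_cancel₀ _ hk0] using pow_eq_conj_pow_mul_exp_natCast_mul h k
  · rw [normSq_ofReal_sqrt_mul k.cast_nonneg, ofReal_mul, ofReal_natCast, mul_left_comm]
    exact pow_eq_conj_pow_mul_exp_natCast_mul h k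
  · rw [iteratedDeriv_fun_pow_zero, if_neg hj.ne, Nat.cast_zero]
  · rw [iteratedDeriv_fun_pow_zero, if_pos rfl]
    exact_mod_cast k.factorial_ne_zero
end
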